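/- Let X be a reflexive Banach space and Y a Banach space such that the pair (X,Y) satisfies both property (m) and property (o). Then (X,Y) has the weak minimizing property: every bounded linear operator T : X → Y admitting a minimizing sequence (x_n) ⊂ S_X (i.e., ‖T x_n‖ → m(T)) that is not weakly null attains its minimum modulus. -/

import Mathlib

/-!
A non-weakly-null minimizing sequence `xₙ` on the unit sphere has, by reflexivity, a subsequence
`p + zₙ` with `zₙ` weakly null and `p ≠ 0` (weak sequential compactness of bounded sets comes from
sequential Banach–Alaoglu on the bidual of the separable closed span of the sequence). If
`m(T) = 0` then `T p = 0`. Otherwise rescale to `m(T) = 1`, so that `‖p‖ ≤ ‖T p‖`. If this were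
strict, (o) would give `limsup ‖zₙ‖ < limsup ‖T p + T zₙ‖ = 1`, whereas (m) applied to `α p`
with `α = ‖T p‖ / ‖p‖ > 1` gives `limsup ‖α p + zₙ‖ ≤ 1`, which is impossible because
`‖α p + zₙ‖ ≥ α - (α - 1) ‖zₙ‖`. Hence `‖T p‖ = m(T) ‖p‖`, and `p / ‖p‖` attains `m(T)`.
-/

open Filter Topology

noncomputable def minMod {X Y : Type*} [NormedAddCommGroup X] [NormedSpace ℝ X]
    [NormedAddCommGroup Y] [NormedSpace ℝ Y] (T : X →L[ℝ] Y) : ℝ :=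
  sInf {r : ℝ | ∃ x : X, ‖x‖ = 1 ∧ ‖T x‖ = r}

def WeaklyNull {X : Type*} [NormedAddCommGroup X] [NormedSpace ℝ X] (x : ℕ → X) : Prop :=
  ∀ f : X →L[ℝ] ℝ, Tendsto (fun n => f (x n)) atTop (𝓝 0)

def AttainsMinMod {X Y : Type*} [NormedAddCommGroup X] [NormedSpace ℝ X]
    [NormedAddCommGroup Y] [NormedSpace ℝ Y] (T : X →L[ℝ] Y) : Prop :=
  ∃ x : X, ‖x‖ = 1 ∧ ‖T x‖ = minMod T

def PairPropM (X Y : Type*) [NormedAddCommGroup X] [NormedSpace ℝ X]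
    [NormedAddCommGroup Y] [NormedSpace ℝ Y] : Prop :=
  ∀ T : X →L[ℝ] Y, 1 ≤ minMod T →
    ∀ (x : X) (y : Y), ‖x‖ ≤ ‖y‖ → ∀ xs : ℕ → X, WeaklyNull xs →
      limsup (fun n => ‖x + xs n‖) atTop ≤ limsup (fun n => ‖y + T (xs n)‖) atTop

def PairPropO (X Y : Type*) [NormedAddCommGroup X] [NormedSpace ℝ X]
    [NormedAddCommGroup Y] [NormedSpace ℝ Y] : Prop :=
  ∀ T : X →L[ℝ] Y, 1 ≤ minMod T →
    ∀ y : Y, y ≠ 0 → ∀ xs : ℕ → X, WeaklyNull xs →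
      limsup (fun n => ‖xs n‖) atTop < limsup (fun n => ‖y + T (xs n)‖) atTop

def PropertyM (X : Type*) [NormedAddCommGroup X] [NormedSpace ℝ X] : Prop :=
  ∀ x y : X, ‖y‖ ≤ ‖x‖ → ∀ xs : ℕ → X, WeaklyNull xs →
    limsup (fun n => ‖y + xs n‖) atTop ≤ limsup (fun n => ‖x + xs n‖) atTop

def OpialProperty (X : Type*) [NormedAddCommGroup X] [NormedSpace ℝ X] : Prop :=
  ∀ x : X, x ≠ 0 → ∀ xs : ℕ → X, WeaklyNull xs →
    limsup (fun n => ‖xs n‖) atTop < limsup (fun n => ‖x + xs n‖) atTop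

def WeakMinimizingProperty (X Y : Type*) [NormedAddCommGroup X] [NormedSpace ℝ X]
    [NormedAddCommGroup Y] [NormedSpace ℝ Y] : Prop :=
  ∀ T : X →L[ℝ] Y,
    (∃ xs : ℕ → X, (∀ n, ‖xs n‖ = 1) ∧
      Tendsto (fun n => ‖T (xs n)‖) atTop (𝓝 (minMod T)) ∧ ¬ WeaklyNull xs) →
    AttainsMinMod T

open NormedSpace TopologicalSpace

section Reflexive

variable {X : Type*} [NormedAddCommGroup X] [NormedSpace ℝ X]

theorem Submodule.exists_dual_map_eq_zero_of_notMem (Z : Submodule ℝ X)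
    (hZ : IsClosed (Z : Set X)) {x : X} (hx : x ∉ Z) :
    ∃ f : StrongDual ℝ X, (∀ z ∈ Z, f z = 0) ∧ f x ≠ 0 := by
  obtain ⟨f, u, hZu, hux⟩ := geometric_hahn_banach_closed_point Z.convex hZ hx
  have hu : 0 < u := by simpa using hZu 0 Z.zero_mem
  refine ⟨f, fun z hz => ?_, fun hfx => by linarith⟩
  -- a linear functional bounded above on a subspace vanishes there
  by_contra hfz
  have := hZu (((|u| + 1) / f z) • z) (Z.smul_mem _ hz)
  rw [map_smul, smul_eq_mul, div_mul_cancel₀ _ hfz] at this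
  linarith [le_abs_self u]

theorem Submodule.surjective_inclusionInDoubleDual
    (hrefl : Function.Surjective (inclusionInDoubleDual ℝ X))
    (Z : Submodule ℝ X) (hZ : IsClosed (Z : Set X)) :
    Function.Surjective (inclusionInDoubleDual ℝ Z) := by
  intro Λ
  let restrict : StrongDual ℝ X →L[ℝ] StrongDual ℝ Z :=
    (ContinuousLinearMap.compL ℝ Z X ℝ).flip Z.subtypeL
  obtain ⟨x, hx⟩ := hrefl (Λ.comp restrict)
  have hΛ : ∀ f : StrongDual ℝ X, f x = Λ (f.comp Z.subtypeL) := fun f =>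
    congrArg (fun Φ : StrongDual ℝ (StrongDual ℝ X) => Φ f) hx
  have hxZ : x ∈ Z := by
    by_contra hxZ
    obtain ⟨f, hfZ, hfx⟩ := Z.exists_dual_map_eq_zero_of_notMem hZ hxZ
    have hf0 : f.comp Z.subtypeL = 0 := by ext z; exact hfZ z z.2
    exact hfx (by rw [hΛ, hf0, map_zero])
  refine ⟨⟨x, hxZ⟩, ContinuousLinearMap.ext fun g => ?_⟩
  obtain ⟨f, hfg, -⟩ := exists_extension_norm_eq Z g
  have hfg' : f.comp Z.subtypeL = g := by ext z; exact hfg z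
  rw [dual_def, ← hfg', ← hΛ]
  rfl

theorem Submodule.eq_top_of_forall_dual_eq_zero (Z : Submodule ℝ X) (hZ : IsClosed (Z : Set X))
    (h : ∀ f : StrongDual ℝ X, (∀ z ∈ Z, f z = 0) → f = 0) : Z = ⊤ := by
  refine eq_top_iff.2 fun x _ => ?_
  by_contra hx
  obtain ⟨f, hfZ, hfx⟩ := Z.exists_dual_map_eq_zero_of_notMem hZ hx
  exact hfx (by rw [h f hfZ, zero_apply])

theorem exists_norm_le_one_and_norm_div_two_le_norm_apply (F : StrongDual ℝ X) :
    ∃ w : X, ‖w‖ ≤ 1 ∧ ‖F‖ / 2 ≤ ‖F w‖ := by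
  rcases eq_or_ne F 0 with rfl | hF
  · exact ⟨0, by simp, by simp⟩
  · obtain ⟨w, hw, hFw⟩ := F.exists_lt_apply_of_lt_opNorm
      (half_lt_self (norm_pos_iff.2 hF))
    exact ⟨w, hw.le, hFw.le⟩

theorem separableSpace_of_separableSpace_dual [SeparableSpace (StrongDual ℝ X)] :
    SeparableSpace X := by
  obtain ⟨F, hF⟩ := exists_dense_seq (StrongDual ℝ X)
  choose w hw hFw using fun i => exists_norm_le_one_and_norm_div_two_le_norm_apply (F i)
  let Z := (Submodule.span ℝ (Set.range w)).topologicalClosure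
  have hwZ : ∀ i, w i ∈ Z := fun i =>
    Submodule.le_topologicalClosure _ (Submodule.subset_span (Set.mem_range_self i))
  -- a functional `G ≠ 0` vanishing on `Z` is within `‖G‖ / 3` of some `F i`, which then
  -- has to be both large and small at `w i`
  have hZ : Z = ⊤ := by
    refine Z.eq_top_of_forall_dual_eq_zero (Submodule.isClosed_topologicalClosure _)
      fun G hGZ => ?_
    by_contra hG
    have hG : 0 < ‖G‖ := norm_pos_iff.2 hG
    obtain ⟨i, hi⟩ := Metric.denseRange_iff.1 hF G (‖G‖ / 3) (by positivity)
    rw [dist_eq_norm] at hi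
    have hFi : ‖G‖ ≤ ‖G - F i‖ + ‖F i‖ := norm_le_norm_sub_add G (F i)
    have hFiw : ‖F i (w i)‖ ≤ ‖G - F i‖ := by
      calc ‖F i (w i)‖ = ‖(G - F i) (w i)‖ := by simp [hGZ _ (hwZ i)]
        _ ≤ ‖G - F i‖ * ‖w i‖ := (G - F i).le_opNorm _
        _ ≤ ‖G - F i‖ := mul_le_of_le_one_right (norm_nonneg _) (hw i)
    linarith [hFw i]
  have hsep : IsSeparable (Z : Set X) := by
    rw [Submodule.topologicalClosure_coe]
    exact (Set.countable_range w).isSeparable.span.closure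
  rw [hZ, Submodule.top_coe] at hsep
  exact isSeparable_univ_iff.1 hsep

theorem exists_subseq_weakly_tendsto_of_separableSpace_dual [SeparableSpace (StrongDual ℝ X)]
    (hrefl : Function.Surjective (inclusionInDoubleDual ℝ X)) (x : ℕ → X) {C : ℝ}
    (hx : ∀ n, ‖x n‖ ≤ C) :
    ∃ (φ : ℕ → ℕ) (p : X), StrictMono φ ∧
      ∀ f : StrongDual ℝ X, Tendsto (fun n => f (x (φ n))) atTop (𝓝 (f p)) := by
  let u : ℕ → WeakDual ℝ (StrongDual ℝ X) := fun n =>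
    StrongDual.toWeakDual (inclusionInDoubleDual ℝ X (x n))
  have hu : ∀ n, u n ∈ WeakDual.toStrongDual ⁻¹' Metric.closedBall 0 C := fun n => by
    rw [Set.mem_preimage, mem_closedBall_zero_iff (E := StrongDual ℝ (StrongDual ℝ X))]
    exact (double_dual_bound ℝ X (x n)).trans (hx n)
  obtain ⟨Λ, -, φ, hφ, hΛ⟩ := WeakDual.isSeqCompact_closedBall ℝ (StrongDual ℝ X) 0 C hu
  obtain ⟨p, hp⟩ := hrefl (WeakDual.toStrongDual Λ)
  refine ⟨φ, p, hφ, fun f => ?_⟩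
  have hpf : f p = Λ f := congrArg (fun Φ : StrongDual ℝ (StrongDual ℝ X) => Φ f) hp
  rw [hpf]
  exact ((WeakDual.eval_continuous f).tendsto Λ).comp hΛ

theorem exists_subseq_weakly_tendsto (hrefl : Function.Surjective (inclusionInDoubleDual ℝ X))
    (x : ℕ → X) {C : ℝ} (hx : ∀ n, ‖x n‖ ≤ C) :
    ∃ (φ : ℕ → ℕ) (p : X), StrictMono φ ∧
      ∀ f : StrongDual ℝ X, Tendsto (fun n => f (x (φ n))) atTop (𝓝 (f p)) := by
  let Z := (Submodule.span ℝ (Set.range x)).topologicalClosure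
  have hZ : IsClosed (Z : Set X) := Submodule.isClosed_topologicalClosure _
  have hxZ : ∀ n, x n ∈ Z := fun n =>
    Submodule.le_topologicalClosure _ (Submodule.subset_span (Set.mem_range_self n))
  have hZrefl := Z.surjective_inclusionInDoubleDual hrefl hZ
  have : SeparableSpace Z := by
    refine IsSeparable.separableSpace ?_
    rw [Submodule.topologicalClosure_coe]
    exact (Set.countable_range x).isSeparable.span.closure
  have : SeparableSpace (StrongDual ℝ (StrongDual ℝ Z)) :=
    hZrefl.denseRange.separableSpace (inclusionInDoubleDual ℝ Z).continuous
  have : SeparableSpace (StrongDual ℝ Z) :=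
    separableSpace_of_separableSpace_dual (X := StrongDual ℝ Z)
  obtain ⟨φ, p, hφ, hp⟩ := exists_subseq_weakly_tendsto_of_separableSpace_dual hZrefl
    (fun n => (⟨x n, hxZ n⟩ : Z)) hx
  exact ⟨φ, p, hφ, fun f => by simpa using hp (f.comp Z.subtypeL)⟩

end Reflexive

section WeaklyNull

variable {X : Type*} [NormedAddCommGroup X] [NormedSpace ℝ X]

theorem WeaklyNull.tendsto_apply_add {zs : ℕ → X} (hzs : WeaklyNull zs) (f : StrongDual ℝ X)
    (p : X) : Tendsto (fun n => f (p + zs n)) atTop (𝓝 (f p)) := by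
  simpa using (hzs f).const_add (f p)

theorem exists_subseq_weaklyNull_sub_ne_zero
    (hrefl : Function.Surjective (inclusionInDoubleDual ℝ X)) (xs : ℕ → X) {C : ℝ}
    (hxs : ∀ n, ‖xs n‖ ≤ C) (hnull : ¬ WeaklyNull xs) :
    ∃ (θ : ℕ → ℕ) (p : X), StrictMono θ ∧ p ≠ 0 ∧ WeaklyNull (fun n => xs (θ n) - p) := by
  obtain ⟨f, hf⟩ : ∃ f : StrongDual ℝ X, ¬ Tendsto (fun n => f (xs n)) atTop (𝓝 0) := by
    simpa [WeaklyNull] using hnull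
  obtain ⟨ε, hε, hfreq⟩ : ∃ ε > 0, ∃ᶠ n in atTop, ε ≤ ‖f (xs n)‖ := by
    rw [Metric.tendsto_atTop] at hf
    push Not at hf
    obtain ⟨ε, hε, hN⟩ := hf
    exact ⟨ε, hε, frequently_atTop.2 fun N => by simpa using hN N⟩
  obtain ⟨ψ, hψ, hψε⟩ := extraction_of_frequently_atTop hfreq
  obtain ⟨φ, p, hφ, hp⟩ := exists_subseq_weakly_tendsto hrefl (xs ∘ ψ) fun n => hxs (ψ n)
  refine ⟨ψ ∘ φ, p, hψ.comp hφ, ?_, fun g => by simpa using (hp g).sub_const (g p)⟩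
  rintro rfl
  have := ge_of_tendsto (hp f).norm (Eventually.of_forall fun n => hψε (φ n))
  rw [map_zero, norm_zero] at this
  linarith

end WeaklyNull

section MinMod

variable {X Y : Type*} [NormedAddCommGroup X] [NormedSpace ℝ X]
  [NormedAddCommGroup Y] [NormedSpace ℝ Y]

theorem minMod_le_norm_apply (T : X →L[ℝ] Y) {x : X} (hx : ‖x‖ = 1) : minMod T ≤ ‖T x‖ :=
  csInf_le ⟨0, fun _ ⟨_, _, hy⟩ => hy ▸ norm_nonneg _⟩ ⟨x, hx, rfl⟩

theorem minMod_mul_norm_le_norm_apply (T : X →L[ℝ] Y) (x : X) : minMod T * ‖x‖ ≤ ‖T x‖ := by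
  rcases eq_or_ne x 0 with rfl | hx
  · simp
  have hx' : 0 < ‖x‖ := norm_pos_iff.2 hx
  have := minMod_le_norm_apply T (x := ‖x‖⁻¹ • x) (norm_smul_inv_norm hx)
  rwa [map_smul, norm_smul, norm_inv, norm_norm, inv_mul_eq_div, le_div_iff₀ hx'] at this

theorem minMod_nonneg (T : X →L[ℝ] Y) : 0 ≤ minMod T :=
  Real.sInf_nonneg fun _ ⟨_, _, hr⟩ => hr ▸ norm_nonneg _

theorem norm_smul_apply_of_nonneg {T : X →L[ℝ] Y} {c : ℝ} (hc : 0 ≤ c) (x : X) :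
    ‖(c • T) x‖ = c * ‖T x‖ := by
  rw [smul_apply, norm_smul, Real.norm_of_nonneg hc]

open Pointwise in
theorem minMod_smul (T : X →L[ℝ] Y) {c : ℝ} (hc : 0 ≤ c) : minMod (c • T) = c * minMod T := by
  have hset : {r : ℝ | ∃ x : X, ‖x‖ = 1 ∧ ‖(c • T) x‖ = r}
      = c • {r : ℝ | ∃ x : X, ‖x‖ = 1 ∧ ‖T x‖ = r} := by
    ext r
    simp [Set.mem_smul_set, norm_smul, abs_of_nonneg hc]
  rw [minMod, hset, Real.sInf_smul_of_nonneg hc, smul_eq_mul, minMod]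

theorem attainsMinMod_of_norm_apply_eq {T : X →L[ℝ] Y} {p : X} (hp : p ≠ 0)
    (hTp : ‖T p‖ = minMod T * ‖p‖) : AttainsMinMod T := by
  refine ⟨‖p‖⁻¹ • p, norm_smul_inv_norm hp, ?_⟩
  rw [map_smul, norm_smul, norm_inv, norm_norm, hTp, mul_comm,
    mul_inv_cancel_right₀ (norm_ne_zero_iff.2 hp)]

end MinMod

theorem isBoundedUnder_le_norm_add {E : Type*} [SeminormedAddGroup E] {x : E} {zs : ℕ → E}
    {C : ℝ} (hzs : ∀ n, ‖zs n‖ ≤ C) : IsBoundedUnder (· ≤ ·) atTop (fun n => ‖x + zs n‖) :=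
  isBoundedUnder_of ⟨‖x‖ + C, fun n => (norm_add_le _ _).trans (by linarith [hzs n])⟩

section Limsup

variable {X : Type*} [NormedAddCommGroup X] [NormedSpace ℝ X]

theorem one_lt_limsup_norm_smul_add {p : X} {zs : ℕ → X} (hunit : ∀ n, ‖p + zs n‖ = 1)
    (hzs : limsup (fun n => ‖zs n‖) atTop < 1) {α : ℝ} (hα : 1 < α) :
    1 < limsup (fun n => ‖α • p + zs n‖) atTop := by
  have hbdd : ∀ n, ‖zs n‖ ≤ 1 + ‖p‖ := fun n => by
    simpa [hunit n] using norm_sub_le (p + zs n) p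
  obtain ⟨ρ, hρ, hρ1⟩ := exists_between hzs
  have hsmall : ∀ᶠ n in atTop, ‖zs n‖ < ρ :=
    eventually_lt_of_limsup_lt hρ (isBoundedUnder_of ⟨_, hbdd⟩)
  -- `α = ‖α • (p + zs n)‖ ≤ ‖α • p + zs n‖ + (α - 1) ‖zs n‖`
  have hlarge : ∀ᶠ n in atTop, α - (α - 1) * ρ ≤ ‖α • p + zs n‖ := by
    filter_upwards [hsmall] with n hn
    have hsplit : α • (p + zs n) = (α • p + zs n) + (α - 1) • zs n := by module
    have := norm_add_le (α • p + zs n) ((α - 1) • zs n)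
    rw [← hsplit, norm_smul, norm_smul, hunit n, Real.norm_of_nonneg (by linarith),
      Real.norm_of_nonneg (by linarith)] at this
    nlinarith
  calc 1 < α - (α - 1) * ρ := by nlinarith
    _ ≤ _ := le_limsup_of_frequently_le hlarge.frequently (isBoundedUnder_le_norm_add hbdd)

end Limsup

section PairProperties

variable {X Y : Type*} [NormedAddCommGroup X] [NormedSpace ℝ X]
  [NormedAddCommGroup Y] [NormedSpace ℝ Y]

theorem apply_eq_zero_of_tendsto_norm_apply_add {T : X →L[ℝ] Y} {p : X} {zs : ℕ → X}
    (hzs : WeaklyNull zs) (hT : Tendsto (fun n => ‖T (p + zs n)‖) atTop (𝓝 0)) : T p = 0 := by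
  refine SeparatingDual.eq_zero_of_forall_dual_eq_zero (R := ℝ) fun g => ?_
  refine tendsto_nhds_unique (hzs.tendsto_apply_add (g.comp T) p) ?_
  refine squeeze_zero_norm (fun n => g.le_opNorm _) ?_
  simpa using hT.const_mul ‖g‖

theorem norm_apply_le_norm_of_one_le_minMod (hm : PairPropM X Y) (ho : PairPropO X Y)
    {T : X →L[ℝ] Y} (hT : 1 ≤ minMod T) {p : X} {zs : ℕ → X} (hzs : WeaklyNull zs)
    (hunit : ∀ n, ‖p + zs n‖ = 1) (hlim : Tendsto (fun n => ‖T (p + zs n)‖) atTop (𝓝 1)) :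
    ‖T p‖ ≤ ‖p‖ := by
  by_contra! hlt
  have hTp : T p ≠ 0 := norm_pos_iff.1 ((norm_nonneg p).trans_lt hlt)
  have hp : 0 < ‖p‖ := norm_pos_iff.2 fun hp => hTp (by rw [hp, map_zero])
  have hlimsup : limsup (fun n => ‖T p + T (zs n)‖) atTop = 1 := by
    simpa only [map_add] using hlim.limsup_eq
  have hzs_lt : limsup (fun n => ‖zs n‖) atTop < 1 := hlimsup ▸ ho T hT (T p) hTp zs hzs
  set α := ‖T p‖ / ‖p‖
  have hα : 1 < α := (one_lt_div hp).2 hlt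
  have hαp : ‖α • p‖ = ‖T p‖ := by
    rw [norm_smul, Real.norm_of_nonneg (by positivity), div_mul_cancel₀ _ hp.ne']
  have := hlimsup ▸ hm T hT (α • p) (T p) hαp.le zs hzs
  exact (one_lt_limsup_norm_smul_add hunit hzs_lt hα).not_ge this

theorem norm_apply_le_minMod_mul_norm (hm : PairPropM X Y) (ho : PairPropO X Y)
    (T : X →L[ℝ] Y) {p : X} {zs : ℕ → X} (hzs : WeaklyNull zs) (hunit : ∀ n, ‖p + zs n‖ = 1)
    (hlim : Tendsto (fun n => ‖T (p + zs n)‖) atTop (𝓝 (minMod T))) :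
    ‖T p‖ ≤ minMod T * ‖p‖ := by
  rcases (minMod_nonneg T).eq_or_lt with hzero | hpos
  · rw [← hzero] at hlim ⊢
    simp [apply_eq_zero_of_tendsto_norm_apply_add hzs hlim]
  -- (m) and (o) only speak about operators with minimum modulus at least one
  have hT' : 1 ≤ minMod ((minMod T)⁻¹ • T) := by
    rw [minMod_smul T (inv_nonneg.2 hpos.le), inv_mul_cancel₀ hpos.ne']
  have hlim' : Tendsto (fun n => ‖((minMod T)⁻¹ • T) (p + zs n)‖) atTop (𝓝 1) := by
    simpa only [norm_smul_apply_of_nonneg (inv_nonneg.2 hpos.le), inv_mul_cancel₀ hpos.ne'] using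
      hlim.const_mul (minMod T)⁻¹
  have := norm_apply_le_norm_of_one_le_minMod hm ho hT' hzs hunit hlim'
  rwa [norm_smul_apply_of_nonneg (inv_nonneg.2 hpos.le), inv_mul_le_iff₀ hpos] at this

end PairProperties

theorem stmt3_general {X Y : Type*} [NormedAddCommGroup X] [NormedSpace ℝ X]
    [NormedAddCommGroup Y] [NormedSpace ℝ Y]
    (hrefl : Function.Surjective ⇑(NormedSpace.inclusionInDoubleDual ℝ X))
    (hm : PairPropM X Y) (ho : PairPropO X Y) :
    WeakMinimizingProperty X Y := by
  rintro T ⟨xs, hunit, hlim, hnull⟩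
  obtain ⟨θ, p, hθ, hp, hzs⟩ :=
    exists_subseq_weaklyNull_sub_ne_zero hrefl xs (fun n => (hunit n).le) hnull
  refine attainsMinMod_of_norm_apply_eq hp
    (le_antisymm ?_ (minMod_mul_norm_le_norm_apply T p))
  refine norm_apply_le_minMod_mul_norm hm ho T hzs (fun n => ?_) ?_
  · rw [add_sub_cancel, hunit]
  · simpa only [add_sub_cancel, Function.comp_def] using hlim.comp hθ.tendsto_atTop

theorem stmt3 {X Y : Type*} [NormedAddCommGroup X] [NormedSpace ℝ X] [CompleteSpace X]
    [NormedAddCommGroup Y] [NormedSpace ℝ Y] [CompleteSpace Y]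
    (hrefl : Function.Surjective ⇑(NormedSpace.inclusionInDoubleDual ℝ X))
    (hm : PairPropM X Y) (ho : PairPropO X Y) :
    WeakMinimizingProperty X Y :=
  stmt3_general hrefl hm ho
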